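/- arXiv:2012.14095 — 3 statements merged into one kernel-verified Lean document; each statement's English description precedes it below -/
import Mathlib

section
/- Let n ≥ 1 and m ≥ 1 be naturals, let X be the type of Boolean strings of length n, let f : X → Bool, let D : (Fin m → X × Bool) → Bool, and let i ∈ Fin m. Then the probability, over uniformly random x : Fin m → X and r : Fin m → Bool, that the predictor value g_{i,r,x}(x i) equals f (x i) is exactly 1/2 + P_i(f,D) − P_{i+1}(f,D). -/
open scoped Classical

/-- Probability of a predicate under the uniform distribution on a finite type. -/
noncomputable def pr {α : Type*} [Fintype α] (p : α → Prop) : ℝ :=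
  ((Finset.univ.filter p).card : ℝ) / (Fintype.card α)

/-- The hybrid sample list: the `j`-th entry is `(x j, f (x j))` if `j < i`
and `(x j, r j)` otherwise. -/
def hybSample {n m : ℕ} (f : (Fin n → Bool) → Bool) (i : ℕ)
    (x : Fin m → (Fin n → Bool)) (r : Fin m → Bool) :
    Fin m → (Fin n → Bool) × Bool :=
  fun j => if (j : ℕ) < i then (x j, f (x j)) else (x j, r j)

/-- The hybrid probability `P_i(f, D)`. -/
noncomputable def hybProb {n m : ℕ} (f : (Fin n → Bool) → Bool)
    (D : (Fin m → (Fin n → Bool) × Bool) → Bool) (i : ℕ) : ℝ :=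
  pr (fun p : (Fin m → (Fin n → Bool)) × (Fin m → Bool) =>
    D (hybSample f i p.1 p.2) = true)

/-- The sample list used by the predictor: the `j`-th entry is `(x j, f (x j))`
for `j < i`, `(y, r i)` for `j = i`, and `(x j, r j)` for `j > i`. -/
def predSample {n m : ℕ} (f : (Fin n → Bool) → Bool) (i : Fin m)
    (r : Fin m → Bool) (x : Fin m → (Fin n → Bool)) (y : Fin n → Bool) :
    Fin m → (Fin n → Bool) × Bool :=
  fun j => if (j : ℕ) < (i : ℕ) then (x j, f (x j))
    else if j = i then (y, r i) else (x j, r j)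

/-- The `(D, f)`-predictor `g_{i,r,x}`. -/
def predictor {n m : ℕ} (f : (Fin n → Bool) → Bool)
    (D : (Fin m → (Fin n → Bool) × Bool) → Bool) (i : Fin m)
    (r : Fin m → Bool) (x : Fin m → (Fin n → Bool)) (y : Fin n → Bool) : Bool :=
  if D (predSample f i r x y) = true then !(r i) else r i

/-!
The predictor is right exactly when `r i = f (x i)` differs in truth value from "`D` accepts the
`i`-th hybrid", so its success probability is
`Pr[r i = f (x i)] + P_i - 2 Pr[r i = f (x i) ∧ D accepts H_i]`. On the event `r i = f (x i)` the
hybrids `H_i` and `H_(i+1)` coincide, and flipping the bit `r i` fixes `H_(i+1)` while toggling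
that event; hence `Pr[r i = f (x i)] = 1/2` and the last probability is `P_(i+1) / 2`.
-/

section UniformProbability

variable {α β : Type*} [Fintype α] [Fintype β]

theorem pr_true [Nonempty α] : pr (fun _ : α => True) = 1 := by
  simp [pr]

theorem pr_comp_equiv (e : α ≃ β) (p : β → Prop) : pr (p ∘ e) = pr p := by
  unfold pr
  rw [Fintype.card_congr e, Finset.card_equiv e (t := Finset.univ.filter p) (by simp)]

theorem pr_or_of_disjoint {p q : α → Prop} (h : ∀ a, p a → ¬ q a) :
    pr (fun a => p a ∨ q a) = pr p + pr q := by
  unfold pr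
  rw [← add_div, ← Nat.cast_add,
    ← Finset.card_union_of_disjoint (Finset.disjoint_filter.2 fun a _ => h a)]
  congr 3
  ext a
  simp

theorem pr_and_add_pr_and_not (p q : α → Prop) :
    pr (fun a => p a ∧ q a) + pr (fun a => p a ∧ ¬ q a) = pr p := by
  unfold pr
  rw [← add_div, ← Nat.cast_add,
    ← Finset.card_filter_add_card_filter_not (s := Finset.univ.filter p) q]
  simp only [Finset.filter_filter]
  congr

theorem pr_xor (p q : α → Prop) :
    pr (fun a => Xor (p a) (q a)) = pr p + pr q - 2 * pr (fun a => p a ∧ q a) := by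
  have hp := pr_and_add_pr_and_not p q
  have hq := pr_and_add_pr_and_not q p
  have hpq : pr (fun a => q a ∧ p a) = pr (fun a => p a ∧ q a) := by simp only [and_comm]
  simp only [xor_def]
  rw [pr_or_of_disjoint fun a h h' => h'.2 h.1]
  linarith

theorem pr_and_eq_half_of_swap (e : α ≃ α) {p q : α → Prop}
    (hp : ∀ a, p (e a) ↔ ¬ p a) (hq : ∀ a, q (e a) ↔ q a) :
    pr (fun a => p a ∧ q a) = pr q / 2 := by
  have hswap : pr (fun a => p a ∧ q a) = pr (fun a => q a ∧ ¬ p a) := by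
    rw [← pr_comp_equiv e]
    simp only [Function.comp_def, hp, hq, and_comm]
  have hcomm : pr (fun a => q a ∧ p a) = pr (fun a => p a ∧ q a) := by simp only [and_comm]
  linarith [pr_and_add_pr_and_not q p]

end UniformProbability

section FlipAt

variable {ι : Type*} [DecidableEq ι] (i : ι)

def flipAt : Equiv.Perm (ι → Bool) :=
  Function.Involutive.toPerm (fun r => Function.update r i (!r i)) fun r => by
    ext j
    by_cases h : j = i
    · subst h; simp
    · simp [Function.update_of_ne h]

theorem flipAt_apply (r : ι → Bool) : flipAt i r = Function.update r i (!r i) := rfl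

theorem flipAt_apply_self (r : ι → Bool) : flipAt i r i = !r i := by
  rw [flipAt_apply, Function.update_self]

end FlipAt

section Hybrids

variable {n m : ℕ} (f : (Fin n → Bool) → Bool) (x : Fin m → (Fin n → Bool))
  (r : Fin m → Bool)

theorem predSample_self (i : Fin m) : predSample f i r x (x i) = hybSample f i x r := by
  funext j
  by_cases hj : j = i
  · subst hj; simp [predSample, hybSample]
  · simp [predSample, hybSample, hj]

theorem hybSample_succ_of_eq {i : Fin m} (h : r i = f (x i)) :
    hybSample f (i + 1) x r = hybSample f i x r := by
  funext j
  by_cases hj : j = i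
  · subst hj; simp [hybSample, h]
  · have : (j : ℕ) ≠ i := Fin.val_ne_of_ne hj
    simp only [hybSample, show ((j : ℕ) < i + 1) = ((j : ℕ) < i) from propext (by omega)]

theorem hybSample_flipAt_of_lt {i : Fin m} {k : ℕ} (h : (i : ℕ) < k) :
    hybSample f k x (flipAt i r) = hybSample f k x r := by
  funext j
  by_cases hj : j = i
  · subst hj; simp [hybSample, h]
  · simp [hybSample, flipAt_apply, Function.update_of_ne hj]

theorem predictor_self_eq_iff (D : (Fin m → (Fin n → Bool) × Bool) → Bool) (i : Fin m) :
    predictor f D i r x (x i) = f (x i) ↔ Xor (r i = f (x i)) (D (hybSample f i x r) = true) := by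
  rw [predictor, predSample_self]
  cases D (hybSample f i x r) <;> cases r i <;> cases f (x i) <;> simp

end Hybrids

theorem stmt2_general {n m : ℕ}
    (f : (Fin n → Bool) → Bool)
    (D : (Fin m → (Fin n → Bool) × Bool) → Bool) (i : Fin m) :
    pr (fun p : (Fin m → (Fin n → Bool)) × (Fin m → Bool) =>
        predictor f D i p.2 p.1 (p.1 i) = f (p.1 i))
      = 1 / 2 + hybProb f D i - hybProb f D ((i : ℕ) + 1) := by
  let e := (Equiv.refl (Fin m → (Fin n → Bool))).prodCongr (flipAt i)
  have hflip : ∀ p, (e p).2 i = f ((e p).1 i) ↔ ¬ p.2 i = f (p.1 i) := by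
    intro p
    change flipAt i p.2 i = f (p.1 i) ↔ _
    rw [flipAt_apply_self]
    cases p.2 i <;> cases f (p.1 i) <;> simp
  have hagree : pr (fun p : (Fin m → (Fin n → Bool)) × (Fin m → Bool) =>
      p.2 i = f (p.1 i)) = 1 / 2 := by
    simpa [pr_true] using pr_and_eq_half_of_swap e (q := fun _ => True) hflip fun _ => Iff.rfl
  have hboth : pr (fun p : (Fin m → (Fin n → Bool)) × (Fin m → Bool) =>
      p.2 i = f (p.1 i) ∧ D (hybSample f i p.1 p.2) = true) = hybProb f D (i + 1) / 2 := by
    calc _ = pr (fun p : (Fin m → (Fin n → Bool)) × (Fin m → Bool) =>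
          p.2 i = f (p.1 i) ∧ D (hybSample f (i + 1) p.1 p.2) = true) := by
          congr 1; ext p
          exact and_congr_right fun h => by rw [hybSample_succ_of_eq f p.1 p.2 h]
      _ = _ := pr_and_eq_half_of_swap e hflip fun p => by
          change D (hybSample f (i + 1) p.1 (flipAt i p.2)) = true ↔ _
          rw [hybSample_flipAt_of_lt f p.1 p.2 (Nat.lt_succ_self i)]
  simp only [predictor_self_eq_iff]
  rw [pr_xor, hagree, hboth]
  unfold hybProb
  ring

theorem stmt2 {n m : ℕ} (hn : 1 ≤ n) (hm : 1 ≤ m)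
    (f : (Fin n → Bool) → Bool)
    (D : (Fin m → (Fin n → Bool) × Bool) → Bool) (i : Fin m) :
    pr (fun p : (Fin m → (Fin n → Bool)) × (Fin m → Bool) =>
        predictor f D i p.2 p.1 (p.1 i) = f (p.1 i))
      = 1 / 2 + hybProb f D i - hybProb f D ((i : ℕ) + 1) :=
  stmt2_general f D i
end

section
/- (Theorem 7, MAX player; Newman, Althöfer, Lipton–Young.) Let r ≥ 1 and c ≥ 1 be naturals, let M : Fin r → Fin c → ℝ be a matrix, let ε > 0 be a real number, and let k ≥ 1 be a natural number with (k : ℝ) ≥ Real.log r / (2·ε²). Then there exists a multiset T of elements of Fin c with card T = k such that for every i ∈ Fin r, (∑_{j ∈ T} M i j) / k ≥ v'(M) − ε·(Mmax − Mmin), where the sum is over the multiset T with multiplicity. -/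
/-- The largest entry of the matrix `M`. -/
noncomputable def Mmax {r c : ℕ} (M : Fin r → Fin c → ℝ) : ℝ :=
  ⨆ i : Fin r, ⨆ j : Fin c, M i j

/-- The smallest entry of the matrix `M`. -/
noncomputable def Mmin {r c : ℕ} (M : Fin r → Fin c → ℝ) : ℝ :=
  ⨅ i : Fin r, ⨅ j : Fin c, M i j

/-- The MAX-value of the zero-sum game with payoff matrix `M`: the supremum over
mixed strategies `q` of the column player of the minimum over pure strategies `i`
of the row player of the expected payoff. -/
noncomputable def maxValue {r c : ℕ} (M : Fin r → Fin c → ℝ) : ℝ :=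
  ⨆ q : {q : Fin c → ℝ // (∀ j, 0 ≤ q j) ∧ ∑ j, q j = 1},
    ⨅ i : Fin r, ∑ j, q.1 j * M i j

/-!
Sample `k` columns independently from an optimal mixed strategy `q` of the column player. Every
row has expected payoff at least `v'(M)` against `q`, so by Hoeffding's inequality its empirical
average over the sample drops more than `ε (Mmax - Mmin)` below `v'(M)` with probability less
than `exp (-2 k ε²) ≤ 1 / r`, and a union bound over the `r` rows leaves a sample that is good
for all of them. The bound must be strict, as equality `r = exp (2 k ε²)` is allowed; the strict
Markov inequality `1[g > 0] < exp (s g)` provides that. If `Mmax = Mmin` every sample is good.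

Probabilities over samples `ω : Fin k → ι` are finite sums weighted by `∏ m, q (ω m)`.
-/

open Finset Real ProbabilityTheory MeasureTheory

section Sampling

variable {ι : Type*} [Fintype ι] {q : ι → ℝ}

lemma sum_mul_exp_le_of_mem_Icc (hq : q ∈ stdSimplex ℝ ι) {x : ι → ℝ} {a b : ℝ}
    (hx : ∀ j, x j ∈ Set.Icc a b) (s : ℝ) :
    ∑ j, q j * exp (s * x j) ≤ exp (s * ∑ j, q j * x j + s ^ 2 * (b - a) ^ 2 / 8) := by
  let _ : MeasurableSpace ι := ⊤
  have _ : DiscreteMeasurableSpace ι := ⟨fun _ ↦ trivial⟩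
  let P : PMF ι := PMF.ofFintype (fun j ↦ ENNReal.ofReal (q j)) (by
    rw [← ENNReal.ofReal_sum_of_nonneg fun j _ ↦ hq.1 j, hq.2, ENNReal.ofReal_one])
  have hP (f : ι → ℝ) : ∫ j, f j ∂P.toMeasure = ∑ j, q j * f j := by
    simp [P, PMF.integral_eq_sum, ENNReal.toReal_ofReal (hq.1 _)]
  have hoeffding := (hasSubgaussianMGF_of_mem_Icc (μ := P.toMeasure) (X := x)
    Measurable.of_discrete.aemeasurable (ae_of_all _ hx)).mgf_le s
  rw [mgf, hP, hP] at hoeffding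
  have hparam : ((‖b - a‖₊ / 2) ^ 2 : NNReal) * s ^ 2 / 2 = s ^ 2 * (b - a) ^ 2 / 8 := by
    push_cast [coe_nnnorm, Real.norm_eq_abs, div_pow, sq_abs]
    ring
  set μ := ∑ j, q j * x j
  calc ∑ j, q j * exp (s * x j) = exp (s * μ) * ∑ j, q j * exp (s * (x j - μ)) := by
        rw [mul_sum]
        refine sum_congr rfl fun j _ ↦ ?_
        rw [mul_left_comm, ← exp_add]
        ring_nf
    _ ≤ exp (s * μ) * exp (s ^ 2 * (b - a) ^ 2 / 8) := by
        rw [← hparam]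
        gcongr
    _ = _ := (exp_add _ _).symm

lemma prod_mem_stdSimplex (hq : q ∈ stdSimplex ℝ ι) (k : ℕ) :
    (fun ω : Fin k → ι ↦ ∏ m, q (ω m)) ∈ stdSimplex ℝ (Fin k → ι) :=
  ⟨fun _ ↦ prod_nonneg fun _ _ ↦ hq.1 _, by rw [← Fintype.sum_pow, hq.2, one_pow]⟩

lemma sum_ite_pos_lt_sum_mul_exp {Ω : Type*} [Fintype Ω] {w : Ω → ℝ} (hw : w ∈ stdSimplex ℝ Ω)
    (g : Ω → ℝ) {s : ℝ} (hs : 0 < s) :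
    ∑ ω, (if 0 < g ω then w ω else 0) < ∑ ω, w ω * exp (s * g ω) := by
  have hind (ω : Ω) : (if 0 < g ω then 1 else 0) < exp (s * g ω) := by
    split_ifs with hg
    · exact one_lt_exp_iff.2 (mul_pos hs hg)
    · exact exp_pos _
  obtain ⟨ω₀, -, hω₀⟩ : ∃ ω ∈ univ, (0 : Ω → ℝ) ω < w ω :=
    exists_lt_of_sum_lt (by simp [hw.2])
  refine sum_lt_sum (fun ω _ ↦ ?_) ⟨ω₀, mem_univ _, ?_⟩
  · rw [← mul_boole]
    exact mul_le_mul_of_nonneg_left (hind ω).le (hw.1 ω)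
  · rw [← mul_boole]
    exact mul_lt_mul_of_pos_left (hind ω₀) hω₀

theorem sum_prod_ite_sum_lt_lt_exp (hq : q ∈ stdSimplex ℝ ι) {x : ι → ℝ} {a b : ℝ} (hab : a < b)
    (hx : ∀ j, x j ∈ Set.Icc a b) (k : ℕ) {t θ : ℝ} (ht : 0 < t)
    (hθ : θ ≤ k * (∑ j, q j * x j - t)) :
    ∑ ω : Fin k → ι, (if ∑ m, x (ω m) < θ then ∏ m, q (ω m) else 0) <
      exp (-2 * k * t ^ 2 / (b - a) ^ 2) := by
  have hba : b - a ≠ 0 := (sub_pos.2 hab).ne'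
  -- the minimizer of the exponent `-s k t + k s² (b - a)² / 8` of the Chernoff bound
  set s := 4 * t / (b - a) ^ 2 with hs
  have hs_pos : 0 < s := by positivity
  set μ := ∑ j, q j * x j
  calc ∑ ω : Fin k → ι, (if ∑ m, x (ω m) < θ then ∏ m, q (ω m) else 0)
      = ∑ ω : Fin k → ι, (if 0 < θ - ∑ m, x (ω m) then ∏ m, q (ω m) else 0) := by
        simp_rw [sub_pos]
    _ < ∑ ω : Fin k → ι, (∏ m, q (ω m)) * exp (s * (θ - ∑ m, x (ω m))) :=
        sum_ite_pos_lt_sum_mul_exp (prod_mem_stdSimplex hq k) _ hs_pos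
    _ = exp (s * θ) * (∑ j, q j * exp (-s * x j)) ^ k := by
        rw [Fintype.sum_pow, mul_sum]
        refine sum_congr rfl fun ω _ ↦ ?_
        rw [mul_sub, sub_eq_add_neg, exp_add, mul_sum, ← sum_neg_distrib, exp_sum,
          prod_mul_distrib]
        simp only [neg_mul]
        ring
    _ ≤ exp (s * θ) * exp (-s * μ + s ^ 2 * (b - a) ^ 2 / 8) ^ k := by
        gcongr
        · exact sum_nonneg fun j _ ↦ mul_nonneg (hq.1 j) (exp_pos _).le
        · simpa using sum_mul_exp_le_of_mem_Icc hq hx (-s)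
    _ = exp (s * θ + k * (-s * μ + s ^ 2 * (b - a) ^ 2 / 8)) := by
        rw [← exp_nat_mul, ← exp_add]
    _ ≤ exp (-2 * k * t ^ 2 / (b - a) ^ 2) := by
        gcongr
        have hsθ : s * θ ≤ s * (k * (μ - t)) := mul_le_mul_of_nonneg_left hθ hs_pos.le
        have hlin : s * (k * t) = 4 * k * t ^ 2 / (b - a) ^ 2 := by
          rw [hs]; field_simp
        have hquad : k * (s ^ 2 * (b - a) ^ 2 / 8) = 2 * k * t ^ 2 / (b - a) ^ 2 := by
          rw [hs]; field_simp; ring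
        linear_combination hsθ + hquad - hlin

lemma exists_forall_not_of_sum_sum_ite_lt_one {Ω κ : Type*} [Fintype Ω] [Fintype κ]
    {w : Ω → ℝ} (hw : w ∈ stdSimplex ℝ Ω) (bad : κ → Ω → Prop) [∀ i, DecidablePred (bad i)]
    (h : ∑ i, ∑ ω, (if bad i ω then w ω else 0) < 1) : ∃ ω, ∀ i, ¬ bad i ω := by
  by_contra! hall
  suffices 1 ≤ ∑ i, ∑ ω, (if bad i ω then w ω else 0) by linarith
  calc 1 = ∑ ω, w ω := hw.2.symm
    _ ≤ ∑ ω, ∑ i, (if bad i ω then w ω else 0) := sum_le_sum fun ω _ ↦ by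
        obtain ⟨i, hi⟩ := hall ω
        calc w ω = if bad i ω then w ω else 0 := (if_pos hi).symm
          _ ≤ _ := single_le_sum (f := fun i ↦ if bad i ω then w ω else 0)
            (fun i _ ↦ by split_ifs <;> simp [hw.1 ω]) (mem_univ i)
    _ = _ := sum_comm

theorem exists_sample_forall_le_sum {κ : Type*} [Fintype κ] [Nonempty κ]
    (hq : q ∈ stdSimplex ℝ ι) {x : κ → ι → ℝ} {a b : ℝ} (hab : a < b)
    (hx : ∀ i j, x i j ∈ Set.Icc a b) {v : ℝ} (hv : ∀ i, v ≤ ∑ j, q j * x i j)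
    {ε : ℝ} (hε : 0 < ε) {k : ℕ} (hk : log (Fintype.card κ) ≤ 2 * k * ε ^ 2) :
    ∃ ω : Fin k → ι, ∀ i, k * (v - ε * (b - a)) ≤ ∑ m, x i (ω m) := by
  have hcard : (0 : ℝ) < Fintype.card κ := by exact_mod_cast Fintype.card_pos
  have hrow (i : κ) : ∑ ω : Fin k → ι,
      (if ∑ m, x i (ω m) < k * (v - ε * (b - a)) then ∏ m, q (ω m) else 0) <
        exp (-2 * k * ε ^ 2) := by
    have hba : b - a ≠ 0 := (sub_pos.2 hab).ne'
    convert sum_prod_ite_sum_lt_lt_exp (θ := k * (v - ε * (b - a))) hq hab (hx i) k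
      (mul_pos hε (sub_pos.2 hab)) (by gcongr; exact hv i) using 2
    field_simp
  obtain ⟨ω, hω⟩ := exists_forall_not_of_sum_sum_ite_lt_one (prod_mem_stdSimplex hq k)
    (fun i ω ↦ ∑ m, x i (ω m) < k * (v - ε * (b - a))) <| calc
      _ < ∑ _i : κ, exp (-2 * k * ε ^ 2) := sum_lt_sum_of_nonempty univ_nonempty fun i _ ↦ hrow i
      _ = Fintype.card κ * exp (-2 * k * ε ^ 2) := by simp
      _ ≤ exp (2 * k * ε ^ 2) * exp (-2 * k * ε ^ 2) := by
          gcongr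
          exact (log_le_iff_le_exp hcard).1 hk
      _ = 1 := by rw [← exp_add, ← exp_zero]; ring_nf
  exact ⟨ω, fun i ↦ not_lt.1 (hω i)⟩

end Sampling

section Game

variable {r c : ℕ} (M : Fin r → Fin c → ℝ)

lemma apply_le_Mmax (i : Fin r) (j : Fin c) : M i j ≤ Mmax M :=
  (le_ciSup (Finite.bddAbove_range _) j).trans
    (le_ciSup (f := fun i ↦ ⨆ j, M i j) (Finite.bddAbove_range _) i)

lemma Mmin_le_apply (i : Fin r) (j : Fin c) : Mmin M ≤ M i j :=
  (ciInf_le (f := fun i ↦ ⨅ j, M i j) (Finite.bddBelow_range _) i).trans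
    (ciInf_le (Finite.bddBelow_range _) j)

lemma exists_mem_stdSimplex_forall_maxValue_le [Nonempty (Fin r)] [Nonempty (Fin c)] :
    ∃ q ∈ stdSimplex ℝ (Fin c), ∀ i, maxValue M ≤ ∑ j, q j * M i j := by
  set g : (Fin c → ℝ) → ℝ := fun q ↦ univ.inf' univ_nonempty fun i ↦ ∑ j, q j * M i j
  have hg : Continuous g := Continuous.finset_inf'_apply _ fun i _ ↦ by fun_prop
  obtain ⟨q, hq, hq_max⟩ := (isCompact_stdSimplex ℝ (Fin c)).exists_isMaxOn
    ⟨_, single_mem_stdSimplex ℝ (Classical.arbitrary _)⟩ hg.continuousOn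
  have : Nonempty {q : Fin c → ℝ // (∀ j, 0 ≤ q j) ∧ ∑ j, q j = 1} := ⟨⟨q, hq⟩⟩
  have hv : maxValue M ≤ g q := ciSup_le fun q' ↦ by
    rw [← inf'_univ_eq_ciInf]
    exact hq_max q'.2
  exact ⟨q, hq, fun i ↦ hv.trans (inf'_le _ (mem_univ i))⟩

lemma maxValue_le_apply_of_Mmax_eq_Mmin (h : Mmax M = Mmin M) (i : Fin r) (j : Fin c) :
    maxValue M ≤ M i j := by
  have : Nonempty (Fin r) := ⟨i⟩
  have : Nonempty (Fin c) := ⟨j⟩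
  have hM (j' : Fin c) : M i j' = M i j := by
    linarith [apply_le_Mmax M i j, apply_le_Mmax M i j', Mmin_le_apply M i j, Mmin_le_apply M i j']
  obtain ⟨q, hq, hqv⟩ := exists_mem_stdSimplex_forall_maxValue_le M
  simpa [hM, ← sum_mul, hq.2] using hqv i

end Game

theorem stmt7 {r c : ℕ} (hr : 1 ≤ r) (hc : 1 ≤ c) (M : Fin r → Fin c → ℝ)
    (ε : ℝ) (hε : 0 < ε) (k : ℕ) (hk : 1 ≤ k)
    (hklog : (k : ℝ) ≥ Real.log r / (2 * ε ^ 2)) :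
    ∃ T : Multiset (Fin c), Multiset.card T = k ∧
      ∀ i : Fin r,
        (T.map (fun j => M i j)).sum / (k : ℝ) ≥
          maxValue M - ε * (Mmax M - Mmin M) := by
  have := Fin.pos_iff_nonempty.1 hr
  have := Fin.pos_iff_nonempty.1 hc
  suffices ∃ ω : Fin k → Fin c, ∀ i, k * (maxValue M - ε * (Mmax M - Mmin M)) ≤ ∑ m, M i (ω m) by
    obtain ⟨ω, hω⟩ := this
    refine ⟨univ.val.map ω, by simp, fun i ↦ ?_⟩
    rw [Multiset.map_map, ge_iff_le, le_div_iff₀ (by exact_mod_cast hk), mul_comm]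
    exact hω i
  rcases (Mmin_le_apply M ⟨0, hr⟩ ⟨0, hc⟩ |>.trans (apply_le_Mmax M _ _)).eq_or_lt with hD | hD
  · refine ⟨fun _ ↦ ⟨0, hc⟩, fun i ↦ ?_⟩
    simpa [← hD] using mul_le_mul_of_nonneg_left
      (maxValue_le_apply_of_Mmax_eq_Mmin M hD.symm i ⟨0, hc⟩) k.cast_nonneg
  · obtain ⟨q, hq, hqv⟩ := exists_mem_stdSimplex_forall_maxValue_le M
    refine exists_sample_forall_le_sum hq hD (fun i j ↦ ⟨Mmin_le_apply M i j, apply_le_Mmax M i j⟩)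
      hqv hε ?_
    rw [Fintype.card_fin]
    linarith [(div_le_iff₀ (by positivity)).1 hklog]
end

section
/- Let Ω be a nonempty finite type, let α be a finite type with N := card α ≥ 1, let L ≥ 1 be a natural number, and let tr : Ω → List α be a function such that 1 ≤ (tr w).length ≤ L for every w ∈ Ω. Then there exist a natural number t with 1 ≤ t ≤ L and a list P of elements of α with P.length = t such that, setting S := {w ∈ Ω | P is a prefix of tr w} and S₀ := {w ∈ Ω | tr w = P} (as finsets): (i) card Ω ≤ (3·N)^t · card S, and (ii) 2 · card S ≤ 3 · card S₀. -/
/-!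
Grow the prefix `P` one symbol at a time, keeping the invariant
`card Ω ≤ (3N)^|P| · #{w | P <+: tr w}`. If fewer than two thirds of the strings whose trace
extends `P` have trace exactly `P`, then more than a third of them extend some `P ++ [a]`, and by
pigeonhole one of the `N` symbols `a` carries at least a `1/N` share of those; appending it keeps the
invariant. Traces have length at most `L`, so the process stops within `L` steps, and it cannot
stop at `P = []` because no trace is empty.
-/

open Finset
open scoped Classical

theorem List.IsPrefix.eq_or_exists_concat_prefix {α : Type*} {P l : List α} (h : P <+: l) :
    l = P ∨ ∃ a, P ++ [a] <+: l := by
  obtain ⟨_ | ⟨a, r⟩, rfl⟩ := h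
  · exact .inl (List.append_nil P)
  · exact .inr ⟨a, r, by simp⟩

section Cylinder

variable {Ω α : Type*} [Fintype Ω] (tr : Ω → List α)

noncomputable def cylinder (P : List α) : Finset Ω := univ.filter fun w => P <+: tr w

@[simp]
theorem cylinder_nil : cylinder tr [] = univ :=
  filter_true_of_mem fun _ _ => List.nil_prefix

theorem card_cylinder_le [Fintype α] (P : List α) :
    #(cylinder tr P) ≤ #(univ.filter (tr · = P)) + ∑ a, #(cylinder tr (P ++ [a])) := by
  have hsub : cylinder tr P ⊆
      univ.filter (tr · = P) ∪ univ.biUnion fun a => cylinder tr (P ++ [a]) := by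
    intro w hw
    simp only [cylinder, mem_filter, mem_univ, true_and, mem_union, mem_biUnion] at hw ⊢
    exact hw.eq_or_exists_concat_prefix
  exact (card_le_card hsub).trans ((card_union_le _ _).trans (by gcongr; exact card_biUnion_le))

theorem exists_card_cylinder_le_mul_card_cylinder_concat [Fintype α] {P : List α}
    (h : 3 * #(univ.filter (tr · = P)) < 2 * #(cylinder tr P)) :
    ∃ a, #(cylinder tr P) ≤ 3 * Fintype.card α * #(cylinder tr (P ++ [a])) := by
  have hsplit := card_cylinder_le tr P
  have hne : (univ : Finset α).Nonempty :=
    nonempty_of_sum_ne_zero (f := fun a => #(cylinder tr (P ++ [a]))) (by omega)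
  obtain ⟨a, -, hmax⟩ := exists_max_image univ (fun a => #(cylinder tr (P ++ [a]))) hne
  have hsum : ∑ b, #(cylinder tr (P ++ [b])) ≤ Fintype.card α * #(cylinder tr (P ++ [a])) := by
    simpa using sum_le_card_nsmul univ _ _ fun b _ => hmax b (mem_univ b)
  exact ⟨a, by rw [mul_assoc]; linarith⟩

theorem exists_frequent_prefix [Fintype α] (k : ℕ) (P : List α)
    (hlen : ∀ w, (tr w).length ≤ P.length + k)
    (hP : Fintype.card Ω ≤ (3 * Fintype.card α) ^ P.length * #(cylinder tr P)) :
    ∃ Q : List α, Q.length ≤ P.length + k ∧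
      Fintype.card Ω ≤ (3 * Fintype.card α) ^ Q.length * #(cylinder tr Q) ∧
      2 * #(cylinder tr Q) ≤ 3 * #(univ.filter (tr · = Q)) := by
  induction k generalizing P with
  | zero =>
    have hsub : cylinder tr P ⊆ univ.filter (tr · = P) := by
      intro w hw
      simp only [cylinder, mem_filter, mem_univ, true_and] at hw ⊢
      exact (hw.eq_of_length_le (hlen w)).symm
    have := card_le_card hsub
    exact ⟨P, le_rfl, hP, by omega⟩
  | succ k ih =>
    by_cases hstop : 2 * #(cylinder tr P) ≤ 3 * #(univ.filter (tr · = P))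
    · exact ⟨P, by omega, hP, hstop⟩
    obtain ⟨a, ha⟩ := exists_card_cylinder_le_mul_card_cylinder_concat tr (not_le.mp hstop)
    have hlen' : ∀ w, (tr w).length ≤ (P ++ [a]).length + k := fun w => by
      simpa [add_assoc, add_comm 1 k] using hlen w
    have hP' : Fintype.card Ω ≤
        (3 * Fintype.card α) ^ (P ++ [a]).length * #(cylinder tr (P ++ [a])) :=
      calc Fintype.card Ω ≤ (3 * Fintype.card α) ^ P.length * #(cylinder tr P) := hP
        _ ≤ (3 * Fintype.card α) ^ P.length *
            (3 * Fintype.card α * #(cylinder tr (P ++ [a]))) := by gcongr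
        _ = _ := by rw [List.length_append, List.length_singleton, pow_succ]; ring
    obtain ⟨Q, hQ, hQ'⟩ := ih (P ++ [a]) hlen' hP'
    exact ⟨Q, by simpa [add_assoc, add_comm 1 k] using hQ, hQ'⟩

end Cylinder

theorem stmt12_general {Ω α : Type*} [Fintype Ω] [Nonempty Ω] [Fintype α]
    (L : ℕ)
    (tr : Ω → List α)
    (htr : ∀ w : Ω, 1 ≤ (tr w).length ∧ (tr w).length ≤ L) :
    ∃ (t : ℕ) (P : List α), 1 ≤ t ∧ t ≤ L ∧ P.length = t ∧
      (Fintype.card Ω ≤ (3 * Fintype.card α) ^ t *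
        (Finset.univ.filter (fun w : Ω => P.IsPrefix (tr w))).card) ∧
      (2 * (Finset.univ.filter (fun w : Ω => P.IsPrefix (tr w))).card ≤
        3 * (Finset.univ.filter (fun w : Ω => tr w = P)).card) := by
  obtain ⟨Q, hQL, hcard, hstop⟩ :=
    exists_frequent_prefix tr L [] (fun w => by simpa using (htr w).2) (by simp)
  have hQ : Q ≠ [] := by
    rintro rfl
    have hfiber : univ.filter (tr · = []) = ∅ :=
      filter_false_of_mem fun w _ h => by simpa [h] using (htr w).1
    simp [hfiber] at hstop
  exact ⟨Q.length, Q, List.length_pos_iff.mpr hQ, by simpa using hQL, rfl, hcard, hstop⟩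

theorem stmt12 {Ω α : Type*} [Fintype Ω] [Nonempty Ω] [Fintype α]
    (hN : 1 ≤ Fintype.card α) (L : ℕ) (hL : 1 ≤ L)
    (tr : Ω → List α)
    (htr : ∀ w : Ω, 1 ≤ (tr w).length ∧ (tr w).length ≤ L) :
    ∃ (t : ℕ) (P : List α), 1 ≤ t ∧ t ≤ L ∧ P.length = t ∧
      (Fintype.card Ω ≤ (3 * Fintype.card α) ^ t *
        (Finset.univ.filter (fun w : Ω => P.IsPrefix (tr w))).card) ∧
      (2 * (Finset.univ.filter (fun w : Ω => P.IsPrefix (tr w))).card ≤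
        3 * (Finset.univ.filter (fun w : Ω => tr w = P)).card) :=
  stmt12_general L tr htr
end
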